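/- With D the s×s matrix whose (i,j) entry is d_{ij} = −Σ_{p=1}^c n_{jp}(m_p − n_{ip})/α_p², and with adj(Z(0)) = γ(n·e − b)bᵀ, the trace identity tr(−adj(Z(0))·D) = c·γ holds. -/

import Mathlib

open Finset

/-- `m_p = |V(T_p)|`: the number of vertices of `K_{n_1,…,n_s}` lying in the `p`-th component
of a spanning forest, where `comp` sends each vertex to the index of its component. -/
noncomputable def mP {s c : ℕ} (n : Fin s → ℕ) (comp : (Σ i, Fin (n i)) → Fin c)
    (p : Fin c) : ℕ :=
  Nat.card {v : Σ i, Fin (n i) // comp v = p}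

/-- `n_{ip} = |X_i ∩ V(T_p)|`: the number of vertices of the `i`-th partition class lying in
the `p`-th component. -/
noncomputable def nIP {s c : ℕ} (n : Fin s → ℕ) (comp : (Σ i, Fin (n i)) → Fin c)
    (i : Fin s) (p : Fin c) : ℕ :=
  Nat.card {v : Σ i, Fin (n i) // v.1 = i ∧ comp v = p}

/-- `α_p = n·m_p − Σ_i n_i·n_{ip}` (as a real number). -/
noncomputable def alphaR {s c : ℕ} (n : Fin s → ℕ) (comp : (Σ i, Fin (n i)) → Fin c)
    (p : Fin c) : ℝ :=
  (∑ i, (n i : ℝ)) * (mP n comp p) - ∑ i, (n i : ℝ) * (nIP n comp i p)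

/-- The matrix `Z(0) = I_s − (Σ_p n_{jp}(m_p − n_{ip})/α_p)_{i,j}`. -/
noncomputable def Zzero {s c : ℕ} (n : Fin s → ℕ) (comp : (Σ i, Fin (n i)) → Fin c) :
    Matrix (Fin s) (Fin s) ℝ :=
  1 - Matrix.of fun i j =>
    ∑ p, (nIP n comp j p : ℝ) * ((mP n comp p : ℝ) - (nIP n comp i p : ℝ)) / alphaR n comp p

/-- `D` is the derivative of `Z(x)` at `x = 0`, with entries
`d_{ij} = −Σ_p n_{jp}(m_p − n_{ip})/α_p²`. -/
noncomputable def Dmat {s c : ℕ} (n : Fin s → ℕ) (comp : (Σ i, Fin (n i)) → Fin c) :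
    Matrix (Fin s) (Fin s) ℝ :=
  Matrix.of fun i j =>
    -∑ p, (nIP n comp j p : ℝ) * ((mP n comp p : ℝ) - (nIP n comp i p : ℝ)) /
      (alphaR n comp p) ^ 2

/-! Since `adj(Z(0))` has rank one, `tr(adj(Z(0))·D) = γ·(n·e − b)ᵀ(bᵀD)ᵀ`, and this double sum
factors over components as `−Σ_p (Σ_i (n − n_i) n_{ip}) (Σ_j n_j (m_p − n_{jp})) / α_p²`.
Both inner sums equal `α_p` because `Σ_i n_{ip} = m_p`, so each component contributes `−1`. -/

section Components

open Matrix

variable {s c : ℕ} (n : Fin s → ℕ) (comp : (Σ i, Fin (n i)) → Fin c)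

lemma sum_nIP (p : Fin c) : ∑ i, nIP n comp i p = mP n comp p := by
  classical
  simp only [nIP, mP, Nat.card_eq_fintype_card, Fintype.card_subtype]
  rw [card_eq_sum_card_fiberwise (f := fun v => v.1) (t := univ) fun _ _ => mem_univ _]
  refine (sum_congr rfl fun i _ => ?_).symm
  rw [filter_filter]
  congr 1
  ext v
  simp [and_comm]

lemma sum_sub_mul_nIP_eq_alphaR (p : Fin c) :
    ∑ i, ((∑ k, (n k : ℝ)) - n i) * nIP n comp i p = alphaR n comp p := by
  rw [alphaR, ← sum_nIP n comp p, Nat.cast_sum, mul_sum, ← sum_sub_distrib]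
  exact sum_congr rfl fun i _ => by ring

lemma sum_mul_sub_nIP_eq_alphaR (p : Fin c) :
    ∑ j, (n j : ℝ) * (mP n comp p - nIP n comp j p) = alphaR n comp p := by
  rw [alphaR, sum_mul, ← sum_sub_distrib]
  exact sum_congr rfl fun j _ => by ring

lemma nIP_pos (v : Σ i, Fin (n i)) : 0 < nIP n comp v.1 (comp v) :=
  Nat.card_pos_iff.mpr ⟨⟨v, rfl, rfl⟩, Subtype.finite⟩

lemma alphaR_pos (hs : 2 ≤ s) (hn : ∀ i, 1 ≤ n i) (hsurj : Function.Surjective comp)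
    (p : Fin c) : 0 < alphaR n comp p := by
  have hlt : ∀ i, (n i : ℝ) < ∑ k, (n k : ℝ) := by
    intro i
    have : Nontrivial (Fin s) := Fin.nontrivial_iff_two_le.mpr hs
    obtain ⟨j, hj⟩ := exists_ne i
    refine single_lt_sum (f := fun k => (n k : ℝ)) hj (mem_univ i) (mem_univ j) ?_
      fun k _ _ => by positivity
    exact_mod_cast hn j
  obtain ⟨v, rfl⟩ := hsurj p
  rw [← sum_sub_mul_nIP_eq_alphaR]
  refine sum_pos' (fun i _ => mul_nonneg (sub_nonneg.mpr (hlt i).le) (Nat.cast_nonneg _))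
    ⟨v.1, mem_univ _, mul_pos (sub_pos.mpr (hlt v.1)) ?_⟩
  exact_mod_cast nIP_pos n comp v

lemma dotProduct_vecMul_Dmat (u w : Fin s → ℝ) :
    u ⬝ᵥ (w ᵥ* Dmat n comp) = -∑ p, (∑ i, u i * nIP n comp i p) *
      (∑ j, w j * (mP n comp p - nIP n comp j p)) / alphaR n comp p ^ 2 := by
  simp only [dotProduct, vecMul, Dmat, of_apply, sum_mul, mul_sum, sum_div,
    mul_neg, sum_neg_distrib]
  rw [sum_comm_cycle]
  refine congrArg Neg.neg (sum_congr rfl fun p _ => ?_)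
  rw [sum_comm]
  exact sum_congr rfl fun j _ => sum_congr rfl fun i _ => by ring

end Components

theorem stmt_15_general (s : ℕ) (hs : 2 ≤ s) (n : Fin s → ℕ) (hn : ∀ i, 1 ≤ n i)
    (c : ℕ) (comp : (Σ i, Fin (n i)) → Fin c)
    (hsurj : Function.Surjective comp)
    (γ : ℝ)
    (hadj : (Zzero n comp).adjugate =
      γ • Matrix.vecMulVec (fun i => (∑ k, (n k : ℝ)) - (n i : ℝ)) (fun j => (n j : ℝ))) :
    Matrix.trace (-((Zzero n comp).adjugate * Dmat n comp)) = c * γ := by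
  have hcomponent : ∀ p, alphaR n comp p * alphaR n comp p / alphaR n comp p ^ 2 = 1 :=
    fun p => by
      rw [← sq, div_self (pow_ne_zero 2 (alphaR_pos n comp hs hn hsurj p).ne')]
  rw [hadj, Matrix.smul_mul, Matrix.vecMulVec_mul, Matrix.trace_neg, Matrix.trace_smul,
    Matrix.trace_vecMulVec, dotProduct_vecMul_Dmat]
  simp only [sum_sub_mul_nIP_eq_alphaR, sum_mul_sub_nIP_eq_alphaR, hcomponent, sum_const,
    card_univ, Fintype.card_fin, smul_eq_mul]
  ring

/-- If `adj(Z(0)) = γ(n·e − b)bᵀ`, then `tr(−adj(Z(0))·D) = c·γ`. -/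
theorem stmt_15 (s : ℕ) (hs : 2 ≤ s) (n : Fin s → ℕ) (hn : ∀ i, 1 ≤ n i)
    (F : SimpleGraph (Σ i, Fin (n i)))
    (hFG : F ≤ SimpleGraph.completeMultipartiteGraph (fun i => Fin (n i)))
    (hF : F.IsAcyclic)
    (c : ℕ) (comp : (Σ i, Fin (n i)) → Fin c)
    (hcomp : ∀ u v, comp u = comp v ↔ F.Reachable u v)
    (hsurj : Function.Surjective comp)
    (γ : ℝ)
    (hadj : (Zzero n comp).adjugate =
      γ • Matrix.vecMulVec (fun i => (∑ k, (n k : ℝ)) - (n i : ℝ)) (fun j => (n j : ℝ))) :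
    Matrix.trace (-((Zzero n comp).adjugate * Dmat n comp)) = c * γ :=
  stmt_15_general s hs n hn c comp hsurj γ hadj
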